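/- Under the hypotheses of the previous energy identity, if additionally B(q,q̇) is positive definite for all (q,q̇), G(q,q̇) is positive definite, Φ is lower-bounded, and G + Ξ_G is invertible everywhere, then V(q,q̇) = (1/2)q̇ᵀG(q,q̇)q̇ + Φ(q) is nonincreasing along solutions, and dV/dt = 0 implies q̇ = 0. -/

import Mathlib

open Matrix

/-- Partial derivative of a scalar function on `ℝ^d` in the `k`-th coordinate direction. -/
noncomputable def pd {d : ℕ} (k : Fin d) (f : (Fin d → ℝ) → ℝ) (x : Fin d → ℝ) : ℝ :=
  fderiv ℝ f x (Pi.single k 1)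

/-- `Ξ_G(q,q̇) = (1/2) Σ_i q̇_i ∂_{q̇} g_i(q,q̇)`. -/
noncomputable def XiMat {d : ℕ} (G : (Fin d → ℝ) → (Fin d → ℝ) → Matrix (Fin d) (Fin d) ℝ)
    (q v : Fin d → ℝ) : Matrix (Fin d) (Fin d) ℝ :=
  fun j k => (1 / 2) * ∑ i, v i * pd k (fun v' => G q v' j i) v

/-- `ξ_G(q,q̇) = Ġ_q(q,q̇)q̇ − (1/2)∇_q(q̇ᵀ G q̇)`. -/
noncomputable def xiVec {d : ℕ} (G : (Fin d → ℝ) → (Fin d → ℝ) → Matrix (Fin d) (Fin d) ℝ)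
    (q v : Fin d → ℝ) : Fin d → ℝ :=
  fun i => (∑ j, (∑ k, v k * pd k (fun q' => G q' v i j) q) * v j)
    - (1 / 2) * pd i (fun q' => v ⬝ᵥ (G q' v).mulVec v) q

/-!
Along a curve `s ↦ (q s, q̇ s)` the kinetic energy `½ q̇ᵀ G(q, q̇) q̇` has derivative
`q̇ᵀ G q̈ + ½ q̇ᵀ Ġ q̇` (using `G = Gᵀ`), and `Ġ = D_q G[q̇] + D_q̇ G[q̈]`. The half of
`½ q̇ᵀ Ġ q̇` coming from `D_q̇ G[q̈]` is `q̇ᵀ Ξ_G q̈`, the half coming from `D_q G[q̇]` is `q̇ᵀ ξ_G`.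
So `dV/dt = q̇ᵀ ((G + Ξ_G) q̈ + ξ_G + ∇Φ)`, which the equation of motion turns into `-q̇ᵀ B q̇`;
this is `≤ 0`, and `0` only for `q̇ = 0` since `B` is positive definite.
-/
noncomputable def Matrix.entrywiseFDeriv {E m n : Type*} [NormedAddCommGroup E] [NormedSpace ℝ E]
    (F : E → Matrix m n ℝ) (x u : E) : Matrix m n ℝ :=
  Matrix.of fun i j => fderiv ℝ (fun y => F y i j) x u

theorem fderiv_apply_eq_sum_pd {d : ℕ} (f : (Fin d → ℝ) → ℝ) (x u : Fin d → ℝ) :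
    fderiv ℝ f x u = ∑ k, u k * pd k f x := by
  have hbasis : ∀ k : Fin d, (fun j => if k = j then (1 : ℝ) else 0) = Pi.single k 1 :=
    fun k => funext fun j => by simp [Pi.single_apply, eq_comm]
  simpa [pd, hbasis] using (fderiv ℝ f x).toLinearMap.pi_apply_eq_sum_univ u

theorem fderiv_prod_apply {E F : Type*} [NormedAddCommGroup E] [NormedSpace ℝ E]
    [NormedAddCommGroup F] [NormedSpace ℝ F] {f : E × F → ℝ} {x : E} {y : F}
    (hf : DifferentiableAt ℝ f (x, y)) (u : E) (w : F) :
    fderiv ℝ f (x, y) (u, w) =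
      fderiv ℝ (fun x' => f (x', y)) x u + fderiv ℝ (fun y' => f (x, y')) y w := by
  have hx : HasFDerivAt (fun x' => f (x', y)) _ x :=
    hf.hasFDerivAt.comp x (hasFDerivAt_prodMk_left x y)
  have hy : HasFDerivAt (fun y' => f (x, y')) _ y :=
    hf.hasFDerivAt.comp y (hasFDerivAt_prodMk_right x y)
  rw [hx.fderiv, hy.fderiv, ContinuousLinearMap.comp_apply, ContinuousLinearMap.comp_apply,
    ← map_add]
  simp

theorem HasDerivAt.dotProduct_mulVec {d : ℕ} {v : ℝ → Fin d → ℝ}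
    {M : ℝ → Matrix (Fin d) (Fin d) ℝ} {a : Fin d → ℝ} {M' : Matrix (Fin d) (Fin d) ℝ} {t : ℝ}
    (hv : HasDerivAt v a t)
    (hM : ∀ i j, HasDerivAt (fun s => M s i j) (M' i j) t) :
    HasDerivAt (fun s => v s ⬝ᵥ M s *ᵥ v s)
      (a ⬝ᵥ M t *ᵥ v t + v t ⬝ᵥ M' *ᵥ v t + v t ⬝ᵥ M t *ᵥ a) t := by
  have hvi : ∀ i, HasDerivAt (fun s => v s i) (a i) t := fun i => hasDerivAt_pi.mp hv i
  have hsum := HasDerivAt.fun_sum (u := Finset.univ) fun i _ => (hvi i).fun_mul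
    (HasDerivAt.fun_sum (u := Finset.univ) fun j _ => (hM i j).fun_mul (hvi j))
  refine hsum.congr_deriv ?_
  simp only [dotProduct, mulVec, ← Finset.sum_add_distrib, Finset.mul_sum, mul_add]
  exact Finset.sum_congr rfl fun i _ => Finset.sum_congr rfl fun j _ => by ring

theorem fderiv_dotProduct_mulVec {E n : Type*} [NormedAddCommGroup E] [NormedSpace ℝ E]
    [Fintype n] {F : E → Matrix n n ℝ} {x : E} (hF : ∀ i j, DifferentiableAt ℝ (fun y => F y i j) x)
    (v : n → ℝ) (u : E) :
    fderiv ℝ (fun y => v ⬝ᵥ F y *ᵥ v) x u = v ⬝ᵥ Matrix.entrywiseFDeriv F x u *ᵥ v := by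
  have h : HasFDerivAt (fun y => ∑ i, v i * ∑ j, F y i j * v j)
      (∑ i, v i • ∑ j, v j • fderiv ℝ (fun y => F y i j) x) x :=
    HasFDerivAt.fun_sum fun i _ =>
      (HasFDerivAt.fun_sum fun j _ => (hF i j).hasFDerivAt.mul_const (v j)).const_mul (v i)
  change fderiv ℝ (fun y => ∑ i, v i * ∑ j, F y i j * v j) x u = _
  simp [h.fderiv, Matrix.entrywiseFDeriv, dotProduct, mulVec, mul_comm]

theorem dotProduct_XiMat_mulVec {d : ℕ}
    (G : (Fin d → ℝ) → (Fin d → ℝ) → Matrix (Fin d) (Fin d) ℝ) (x v a : Fin d → ℝ) :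
    v ⬝ᵥ XiMat G x v *ᵥ a = (1 / 2) * (v ⬝ᵥ Matrix.entrywiseFDeriv (G x) v a *ᵥ v) := by
  simp only [XiMat, Matrix.entrywiseFDeriv, fderiv_apply_eq_sum_pd, dotProduct, mulVec, of_apply,
    Finset.mul_sum, Finset.sum_mul]
  refine Finset.sum_congr rfl fun j _ => ?_
  rw [Finset.sum_comm]
  exact Finset.sum_congr rfl fun i _ => Finset.sum_congr rfl fun k _ => by ring

theorem dotProduct_xiVec {d : ℕ}
    {G : (Fin d → ℝ) → (Fin d → ℝ) → Matrix (Fin d) (Fin d) ℝ} {x v : Fin d → ℝ}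
    (hG : ∀ i j, DifferentiableAt ℝ (fun x' => G x' v i j) x) :
    v ⬝ᵥ xiVec G x v = (1 / 2) * (v ⬝ᵥ Matrix.entrywiseFDeriv (fun x' => G x' v) x v *ᵥ v) := by
  have hquad : ∑ i, v i * pd i (fun x' => v ⬝ᵥ G x' v *ᵥ v) x
      = v ⬝ᵥ Matrix.entrywiseFDeriv (fun x' => G x' v) x v *ᵥ v := by
    rw [← fderiv_apply_eq_sum_pd, fderiv_dotProduct_mulVec hG]
  have hfirstTerm : ∑ i, v i * ∑ j, (∑ k, v k * pd k (fun x' => G x' v i j) x) * v j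
      = v ⬝ᵥ Matrix.entrywiseFDeriv (fun x' => G x' v) x v *ᵥ v := by
    simp only [Matrix.entrywiseFDeriv, fderiv_apply_eq_sum_pd, dotProduct, mulVec, of_apply,
      mul_comm]
  have hsplit : v ⬝ᵥ xiVec G x v
      = ∑ i, v i * ∑ j, (∑ k, v k * pd k (fun x' => G x' v i j) x) * v j
        - (1 / 2) * ∑ i, v i * pd i (fun x' => v ⬝ᵥ G x' v *ᵥ v) x := by
    simp only [xiVec, dotProduct, mul_sub, Finset.sum_sub_distrib, Finset.mul_sum]
    ring_nf
  rw [hsplit, hquad, hfirstTerm]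
  ring

theorem hasDerivAt_kineticEnergy {d : ℕ}
    {G : (Fin d → ℝ) → (Fin d → ℝ) → Matrix (Fin d) (Fin d) ℝ} {q v : ℝ → Fin d → ℝ}
    {a : Fin d → ℝ} {t : ℝ}
    (hG : ∀ i j, DifferentiableAt ℝ (fun p : (Fin d → ℝ) × (Fin d → ℝ) => G p.1 p.2 i j)
      (q t, v t))
    (hsym : (G (q t) (v t)).IsSymm) (hq : HasDerivAt q (v t) t) (hv : HasDerivAt v a t) :
    HasDerivAt (fun s => (1 / 2) * (v s ⬝ᵥ G (q s) (v s) *ᵥ v s))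
      (v t ⬝ᵥ ((G (q t) (v t) + XiMat G (q t) (v t)) *ᵥ a + xiVec G (q t) (v t))) t := by
  set Dq := Matrix.entrywiseFDeriv (fun x => G x (v t)) (q t) (v t)
  set Dv := Matrix.entrywiseFDeriv (G (q t)) (v t) a
  have hentry : ∀ i j, HasDerivAt (fun s => G (q s) (v s) i j) ((Dq + Dv) i j) t := fun i j => by
    have := (hG i j).hasFDerivAt.comp_hasDerivAt (f := fun s => (q s, v s)) t (hq.prodMk hv)
    rwa [fderiv_prod_apply (hG i j)] at this
  have hGx : ∀ i j, DifferentiableAt ℝ (fun x => G x (v t) i j) (q t) := fun i j =>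
    (hG i j).comp (q t) (f := fun x => (x, v t))
      (differentiableAt_id.prodMk (differentiableAt_const (v t)))
  have hswap : a ⬝ᵥ G (q t) (v t) *ᵥ v t = v t ⬝ᵥ G (q t) (v t) *ᵥ a := by
    rw [← dotProduct_transpose_mulVec, hsym.eq]
  refine ((hv.dotProduct_mulVec hentry).const_mul (1 / 2)).congr_deriv ?_
  simp only [add_mulVec, dotProduct_add]
  rw [dotProduct_XiMat_mulVec, dotProduct_xiVec hGx, hswap]
  ring

theorem hasDerivAt_totalEnergy {d : ℕ}
    {G : (Fin d → ℝ) → (Fin d → ℝ) → Matrix (Fin d) (Fin d) ℝ} {B : Matrix (Fin d) (Fin d) ℝ}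
    {Φ : (Fin d → ℝ) → ℝ} {q v : ℝ → Fin d → ℝ} {a : Fin d → ℝ} {t : ℝ}
    (hG : ∀ i j, DifferentiableAt ℝ (fun p : (Fin d → ℝ) × (Fin d → ℝ) => G p.1 p.2 i j)
      (q t, v t))
    (hsym : (G (q t) (v t)).IsSymm) (hΦ : DifferentiableAt ℝ Φ (q t))
    (hq : HasDerivAt q (v t) t) (hv : HasDerivAt v a t)
    (hode : (G (q t) (v t) + XiMat G (q t) (v t)) *ᵥ a + xiVec G (q t) (v t)
      = (fun i => - pd i Φ (q t)) - B *ᵥ v t) :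
    HasDerivAt (fun s => (1 / 2) * (v s ⬝ᵥ G (q s) (v s) *ᵥ v s) + Φ (q s))
      (-(v t ⬝ᵥ B *ᵥ v t)) t := by
  refine ((hasDerivAt_kineticEnergy hG hsym hq hv).add
    (hΦ.hasFDerivAt.comp_hasDerivAt t hq)).congr_deriv ?_
  rw [hode, fderiv_apply_eq_sum_pd, dotProduct_sub]
  simp only [dotProduct, mul_neg, Finset.sum_neg_distrib]
  ring

theorem gds_lyapunov_general {d : ℕ}
    (G : (Fin d → ℝ) → (Fin d → ℝ) → Matrix (Fin d) (Fin d) ℝ)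
    (B : (Fin d → ℝ) → (Fin d → ℝ) → Matrix (Fin d) (Fin d) ℝ)
    (Φ : (Fin d → ℝ) → ℝ)
    (q : ℝ → (Fin d → ℝ))
    (hG : ∀ i j, Differentiable ℝ fun p : (Fin d → ℝ) × (Fin d → ℝ) => G p.1 p.2 i j)
    (hsym : ∀ x v i j, G x v i j = G x v j i)
    (hΦ : Differentiable ℝ Φ)
    (hq : ContDiff ℝ 2 q)
    (hode : ∀ t : ℝ,
      (G (q t) (deriv q t) + XiMat G (q t) (deriv q t)).mulVec (deriv (deriv q) t)
          + xiVec G (q t) (deriv q t)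
        = (fun i => - pd i Φ (q t)) - (B (q t) (deriv q t)).mulVec (deriv q t))
    (hB : ∀ x v, (B x v).PosDef) :
    Antitone (fun t : ℝ =>
        (1 / 2) * (deriv q t ⬝ᵥ (G (q t) (deriv q t)).mulVec (deriv q t)) + Φ (q t)) ∧
    ∀ t : ℝ,
      deriv (fun t' =>
          (1 / 2) * (deriv q t' ⬝ᵥ (G (q t') (deriv q t')).mulVec (deriv q t')) + Φ (q t')) t
        = 0 → deriv q t = 0 := by
  have hV : ∀ t, HasDerivAt
      (fun t' => (1 / 2) * (deriv q t' ⬝ᵥ (G (q t') (deriv q t')).mulVec (deriv q t')) + Φ (q t'))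
      (-(deriv q t ⬝ᵥ B (q t) (deriv q t) *ᵥ deriv q t)) t := fun t =>
    hasDerivAt_totalEnergy (fun i j => (hG i j).differentiableAt)
      (IsSymm.ext fun i j => hsym _ _ j i) (hΦ (q t))
      ((hq.differentiable (by norm_num)) t).hasDerivAt
      (hq.differentiable_deriv_two t).hasDerivAt (hode t)
  refine ⟨antitone_of_deriv_nonpos (fun t => (hV t).differentiableAt) fun t => ?_, fun t ht => ?_⟩
  · rw [(hV t).deriv, neg_nonpos]
    simpa using (hB (q t) (deriv q t)).posSemidef.dotProduct_mulVec_nonneg (deriv q t)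
  · rw [(hV t).deriv, neg_eq_zero] at ht
    by_contra hne
    simpa [ht] using (hB (q t) (deriv q t)).dotProduct_mulVec_pos hne

/-- Lyapunov property of GDSs: with `B ≻ 0`, `G ≻ 0`, `Φ` lower bounded and `G + Ξ_G`
invertible, the total energy `V = (1/2)q̇ᵀGq̇ + Φ` is nonincreasing along solutions, and
`dV/dt = 0` implies `q̇ = 0`. -/
theorem gds_lyapunov {d : ℕ}
    (G : (Fin d → ℝ) → (Fin d → ℝ) → Matrix (Fin d) (Fin d) ℝ)
    (B : (Fin d → ℝ) → (Fin d → ℝ) → Matrix (Fin d) (Fin d) ℝ)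
    (Φ : (Fin d → ℝ) → ℝ)
    (q : ℝ → (Fin d → ℝ))
    (hG : ∀ i j, Differentiable ℝ fun p : (Fin d → ℝ) × (Fin d → ℝ) => G p.1 p.2 i j)
    (hsym : ∀ x v i j, G x v i j = G x v j i)
    (hΦ : Differentiable ℝ Φ)
    (hq : ContDiff ℝ 2 q)
    (hode : ∀ t : ℝ,
      (G (q t) (deriv q t) + XiMat G (q t) (deriv q t)).mulVec (deriv (deriv q) t)
          + xiVec G (q t) (deriv q t)
        = (fun i => - pd i Φ (q t)) - (B (q t) (deriv q t)).mulVec (deriv q t))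
    (hB : ∀ x v, (B x v).PosDef)
    (hGpos : ∀ x v, (G x v).PosDef)
    (hΦbdd : BddBelow (Set.range Φ))
    (hinv : ∀ x v, IsUnit (G x v + XiMat G x v).det) :
    Antitone (fun t : ℝ =>
        (1 / 2) * (deriv q t ⬝ᵥ (G (q t) (deriv q t)).mulVec (deriv q t)) + Φ (q t)) ∧
    ∀ t : ℝ,
      deriv (fun t' =>
          (1 / 2) * (deriv q t' ⬝ᵥ (G (q t') (deriv q t')).mulVec (deriv q t')) + Φ (q t')) t
        = 0 → deriv q t = 0 :=
  gds_lyapunov_general G B Φ q hG hsym hΦ hq hode hB
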